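/- arXiv:1203.0749 — 7 statements merged into one kernel-verified Lean document; each statement's English description precedes it below -/
import Mathlib

section
/- Let d₁ and d₂ be coprime odd positive integers. Then for all integers n and m, C(n,m; d₁·d₂) = C(n,m; d₁) · C(n,m; d₂). -/
/-- For integers `n`, `m` and a (odd positive) modulus `d`,
`Csum n m d = Σ_{a ∈ (ℤ/dℤ)ˣ, a·n ≡ m (mod d)} (a/d)`, where `(a/d)` is the Jacobi symbol. -/
def Csum (n m : ℤ) (d : ℕ) : ℤ :=
  ∑ a ∈ Finset.range d,
    if Nat.Coprime a d ∧ (a : ℤ) * n ≡ m [ZMOD (d : ℤ)] then jacobiSym (a : ℤ) d else 0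

lemma coprime_mod_iff (a d : ℕ) : Nat.Coprime (a % d) d ↔ Nat.Coprime a d := by
  rw [Nat.Coprime, Nat.Coprime, ← Nat.gcd_rec, Nat.gcd_comm]

lemma mod_cast_modEq (a d : ℕ) : ((a % d : ℕ) : ℤ) ≡ (a : ℤ) [ZMOD (d : ℤ)] := by
  push_cast
  exact Int.emod_emod_of_dvd _ dvd_rfl

set_option maxHeartbeats 1000000 in
/-- multiplicativity of `C(n,m;d)` in the modulus `d`. -/
theorem Csum_mul (d₁ d₂ : ℕ) (hd₁ : 0 < d₁) (hd₂ : 0 < d₂)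
    (hodd₁ : Odd d₁) (hodd₂ : Odd d₂) (hcop : Nat.Coprime d₁ d₂) (n m : ℤ) :
    Csum n m (d₁ * d₂) = Csum n m d₁ * Csum n m d₂ := by
  unfold Csum
  rw [Finset.sum_mul_sum, ← Finset.sum_product']
  refine Finset.sum_nbij' (fun a => (a % d₁, a % d₂))
    (fun p => (Nat.chineseRemainder hcop p.1 p.2 : ℕ)) ?_ ?_ ?_ ?_ ?_
  · intro a ha
    simp [Finset.mem_product, Nat.mod_lt _ hd₁, Nat.mod_lt _ hd₂]
  · intro p hp
    exact Finset.mem_range.mpr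
      (Nat.chineseRemainder_lt_mul hcop p.1 p.2 hd₁.ne' hd₂.ne')
  · intro a ha
    have h := (Nat.chineseRemainder hcop (a % d₁) (a % d₂)).2
    have h1 : (Nat.chineseRemainder hcop (a % d₁) (a % d₂) : ℕ) ≡ a [MOD d₁] :=
      h.1.trans (Nat.mod_mod_of_dvd a dvd_rfl ▸ (Nat.mod_modEq a d₁))
    have h2 : (Nat.chineseRemainder hcop (a % d₁) (a % d₂) : ℕ) ≡ a [MOD d₂] :=
      h.2.trans (Nat.mod_modEq a d₂)
    have h12 : (Nat.chineseRemainder hcop (a % d₁) (a % d₂) : ℕ) ≡ a [MOD d₁ * d₂] :=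
      (Nat.modEq_and_modEq_iff_modEq_mul hcop).mp ⟨h1, h2⟩
    have hlt := Nat.chineseRemainder_lt_mul hcop (a % d₁) (a % d₂) hd₁.ne' hd₂.ne'
    have := h12
    rwa [Nat.ModEq, Nat.mod_eq_of_lt hlt,
      Nat.mod_eq_of_lt (Finset.mem_range.mp ha)] at this
  · intro p hp
    simp only [Finset.mem_product, Finset.mem_range] at hp
    have h := (Nat.chineseRemainder hcop p.1 p.2).2
    have e1 : (Nat.chineseRemainder hcop p.1 p.2 : ℕ) % d₁ = p.1 := by
      rw [h.1]; exact Nat.mod_eq_of_lt hp.1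
    have e2 : (Nat.chineseRemainder hcop p.1 p.2 : ℕ) % d₂ = p.2 := by
      rw [h.2]; exact Nat.mod_eq_of_lt hp.2
    rw [e1, e2]
  · intro a ha
    haveI : NeZero d₁ := ⟨hd₁.ne'⟩
    haveI : NeZero d₂ := ⟨hd₂.ne'⟩
    have hcop' : Nat.Coprime a (d₁ * d₂) ↔ Nat.Coprime a d₁ ∧ Nat.Coprime a d₂ :=
      Nat.coprime_mul_iff_right
    have hmodeq : ((a : ℤ) * n ≡ m [ZMOD ((d₁ * d₂ : ℕ) : ℤ)]) ↔
        ((a : ℤ) * n ≡ m [ZMOD (d₁ : ℤ)] ∧ (a : ℤ) * n ≡ m [ZMOD (d₂ : ℤ)]) := by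
      rw [show ((d₁ * d₂ : ℕ) : ℤ) = (d₁ : ℤ) * (d₂ : ℤ) by push_cast; ring,
        ← Int.modEq_and_modEq_iff_modEq_mul (by simpa using hcop)]
    have hj : jacobiSym (a : ℤ) (d₁ * d₂) =
        jacobiSym ((a % d₁ : ℕ) : ℤ) d₁ * jacobiSym ((a % d₂ : ℕ) : ℤ) d₂ := by
      rw [jacobiSym.mul_right]
      congr 1
      · exact jacobiSym.mod_left' (mod_cast_modEq a d₁).symm
      · exact jacobiSym.mod_left' (mod_cast_modEq a d₂).symm
    have hm1 : (((a % d₁ : ℕ) : ℤ) * n ≡ m [ZMOD (d₁ : ℤ)]) ↔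
        ((a : ℤ) * n ≡ m [ZMOD (d₁ : ℤ)]) :=
      ⟨fun h => (((mod_cast_modEq a d₁).symm.mul_right n).trans h),
       fun h => (((mod_cast_modEq a d₁).mul_right n).trans h)⟩
    have hm2 : (((a % d₂ : ℕ) : ℤ) * n ≡ m [ZMOD (d₂ : ℤ)]) ↔
        ((a : ℤ) * n ≡ m [ZMOD (d₂ : ℤ)]) :=
      ⟨fun h => (((mod_cast_modEq a d₂).symm.mul_right n).trans h),
       fun h => (((mod_cast_modEq a d₂).mul_right n).trans h)⟩
    have e1 : (Nat.Coprime (a % d₁) d₁ ∧ ((a % d₁ : ℕ) : ℤ) * n ≡ m [ZMOD (d₁ : ℤ)]) ↔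
        (Nat.Coprime a d₁ ∧ (a : ℤ) * n ≡ m [ZMOD (d₁ : ℤ)]) :=
      and_congr (coprime_mod_iff a d₁) hm1
    have e2 : (Nat.Coprime (a % d₂) d₂ ∧ ((a % d₂ : ℕ) : ℤ) * n ≡ m [ZMOD (d₂ : ℤ)]) ↔
        (Nat.Coprime a d₂ ∧ (a : ℤ) * n ≡ m [ZMOD (d₂ : ℤ)]) :=
      and_congr (coprime_mod_iff a d₂) hm2
    have emain : (Nat.Coprime a (d₁ * d₂) ∧ (a : ℤ) * n ≡ m [ZMOD ((d₁ * d₂ : ℕ) : ℤ)]) ↔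
        ((Nat.Coprime a d₁ ∧ (a : ℤ) * n ≡ m [ZMOD (d₁ : ℤ)]) ∧
         (Nat.Coprime a d₂ ∧ (a : ℤ) * n ≡ m [ZMOD (d₂ : ℤ)])) := by
      exact (and_congr hcop' hmodeq).trans and_and_and_comm
    beta_reduce
    by_cases h1 : Nat.Coprime a d₁ ∧ (a : ℤ) * n ≡ m [ZMOD (d₁ : ℤ)]
    · by_cases h2 : Nat.Coprime a d₂ ∧ (a : ℤ) * n ≡ m [ZMOD (d₂ : ℤ)]
      · rw [if_pos (emain.mpr ⟨h1, h2⟩), if_pos (e1.mpr h1), if_pos (e2.mpr h2), hj]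
      · rw [if_neg (fun h => h2 (emain.mp h).2), if_neg (fun h => h2 (e2.mp h)), mul_zero]
    · rw [if_neg (fun h => h1 (emain.mp h).1), if_neg (fun h => h1 (e1.mp h)), zero_mul]
end

section
/- Let p be an odd prime and ℓ ≥ 1 an integer. Suppose n = p^j·n* and m = p^j·m* with p ∤ n*·m* and 0 ≤ j < ℓ. Then C(n,m;p^ℓ) = (n*m* / p^ℓ) · p^j, where (n*m* / p^ℓ) is the Jacobi symbol. -/
lemma sum_range_zmod (K : ℕ) [NeZero K] (g : ZMod K → ℤ) :
    ∑ a ∈ Finset.range K, g a = ∑ x : ZMod K, g x := by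
  refine Finset.sum_nbij' (fun a => ((a : ℕ) : ZMod K)) (fun x => x.val)
    (fun a _ => Finset.mem_univ _)
    (fun x _ => Finset.mem_range.mpr (ZMod.val_lt x)) ?_ ?_ (fun a _ => rfl)
  · intro a ha
    rw [ZMod.val_natCast, Nat.mod_eq_of_lt (Finset.mem_range.mp ha)]
  · intro x _
    rw [ZMod.natCast_val, ZMod.cast_id]

lemma sum_range_mul_zmod (K : ℕ) [NeZero K] (N : ℕ) (g : ZMod K → ℤ) :
    ∑ a ∈ Finset.range (K * N), g a = N * ∑ x : ZMod K, g x := by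
  induction N with
  | zero => simp
  | succ N ih =>
    rw [Nat.mul_succ, Finset.sum_range_add, ih]
    have h : ∀ x : ℕ, ((K * N + x : ℕ) : ZMod K) = ((x : ℕ) : ZMod K) := by
      intro x
      push_cast [ZMod.natCast_self]
      ring
    simp_rw [h]
    rw [sum_range_zmod]
    push_cast
    ring

/-- evaluation of `C(n,m;p^ℓ)` when `n = p^j n*`, `m = p^j m*` with `p ∤ n* m*`
and `0 ≤ j < ℓ`. -/
theorem Csum_prime_pow_eval (p : ℕ) (hp : p.Prime) (hpodd : Odd p)
    (ℓ : ℕ) (hℓ : 1 ≤ ℓ) (j : ℕ) (hj : j < ℓ) (n m nstar mstar : ℤ)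
    (hn : n = (p : ℤ) ^ j * nstar) (hm : m = (p : ℤ) ^ j * mstar)
    (hstar : ¬ (p : ℤ) ∣ nstar * mstar) :
    Csum n m (p ^ ℓ) = jacobiSym (nstar * mstar) (p ^ ℓ) * (p : ℤ) ^ j := by
  have hp0 : (p : ℤ) ≠ 0 := Int.natCast_ne_zero.mpr hp.pos.ne'
  have hpn : ¬ (p : ℤ) ∣ nstar := fun h => hstar (h.mul_right _)
  have hpm : ¬ (p : ℤ) ∣ mstar := fun h => hstar (h.mul_left _)
  set k := ℓ - j with hkdef
  have hk1 : 1 ≤ k := by omega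
  have hkl : k + j = ℓ := by omega
  set K := p ^ k with hKdef
  haveI : NeZero K := ⟨pow_ne_zero _ hp.pos.ne'⟩
  have hsplit : p ^ ℓ = K * p ^ j := by
    rw [hKdef, ← pow_add, hkl]
  have hpK : (p : ℤ) ∣ (K : ℤ) := by
    rw [hKdef]
    push_cast
    exact dvd_pow_self _ (by omega)
  have hpow0 : ((p : ZMod K)) ^ k = 0 := by
    rw [← Nat.cast_pow, ← hKdef, ZMod.natCast_self]
  -- the inverse of nstar mod K
  have hcop : IsCoprime (p : ℤ) nstar :=
    ((Nat.prime_iff_prime_int.mp hp).coprime_iff_not_dvd).mpr hpn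
  obtain ⟨A, B, hAB⟩ := (hcop.pow_left : IsCoprime ((p : ℤ) ^ k) nstar)
  set v : ZMod K := ((B : ℤ) : ZMod K) with hvdef
  have hv : (nstar : ZMod K) * v = 1 := by
    have h := congrArg (fun z : ℤ => ((z : ℤ) : ZMod K)) hAB
    push_cast at h
    rw [hpow0, mul_zero, zero_add] at h
    rw [hvdef, mul_comm]
    exact h
  set u : ZMod K := ((mstar : ℤ) : ZMod K) * v with hudef
  have hQu : ∀ x : ZMod K, x * (nstar : ZMod K) = (mstar : ZMod K) ↔ x = u := by
    intro x
    constructor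
    · intro h
      calc x = x * ((nstar : ZMod K) * v) := by rw [hv, mul_one]
        _ = (x * (nstar : ZMod K)) * v := by ring
        _ = u := by rw [h, hudef]
    · rintro rfl
      calc ((mstar : ZMod K) * v) * (nstar : ZMod K)
          = (mstar : ZMod K) * ((nstar : ZMod K) * v) := by ring
        _ = (mstar : ZMod K) := by rw [hv, mul_one]
  have hdvd : ∀ a : ℕ, ((a : ℤ) * n ≡ m [ZMOD ((p ^ ℓ : ℕ) : ℤ)]) ↔
      (((a : ℕ) : ZMod K) * (nstar : ZMod K) = (mstar : ZMod K)) := by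
    intro a
    rw [hn, hm, Int.modEq_iff_dvd]
    have h1 : ((p ^ ℓ : ℕ) : ℤ) = (p : ℤ) ^ j * (p : ℤ) ^ k := by
      push_cast
      rw [← pow_add]
      congr 1
      omega
    rw [h1]
    have h2 : (p : ℤ) ^ j * mstar - (a : ℤ) * ((p : ℤ) ^ j * nstar)
        = (p : ℤ) ^ j * (mstar - (a : ℤ) * nstar) := by ring
    rw [h2, mul_dvd_mul_iff_left (pow_ne_zero j hp0)]
    have h3 : (p : ℤ) ^ k = (K : ℤ) := by rw [hKdef]; push_cast; ring
    rw [h3, ← ZMod.intCast_zmod_eq_zero_iff_dvd]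
    push_cast
    rw [sub_eq_zero, eq_comm]
  have hnotdvd : ∀ a : ℕ, ((a : ℕ) : ZMod K) = u → ¬ (p ∣ a) := by
    intro a ha hdvda
    have h1 : ((a : ℕ) : ZMod K) * (nstar : ZMod K) = (mstar : ZMod K) := (hQu _).mpr ha
    have h2 : (K : ℤ) ∣ (a : ℤ) * nstar - mstar := by
      rw [← ZMod.intCast_zmod_eq_zero_iff_dvd]
      push_cast
      rw [sub_eq_zero]
      exact h1
    have hpa : (p : ℤ) ∣ (a : ℤ) * nstar := (Int.natCast_dvd_natCast.mpr hdvda).mul_right _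
    have h3 : (p : ℤ) ∣ mstar := by
      have h4 := dvd_sub hpa (hpK.trans h2)
      simpa using h4
    exact hpm h3
  have hPQ : ∀ a : ℕ, (Nat.Coprime a (p ^ ℓ) ∧ (a : ℤ) * n ≡ m [ZMOD ((p ^ ℓ : ℕ) : ℤ)]) ↔
      (((a : ℕ) : ZMod K) = u) := by
    intro a
    constructor
    · rintro ⟨-, h2⟩
      exact (hQu _).mp ((hdvd a).mp h2)
    · intro h
      refine ⟨?_, (hdvd a).mpr ((hQu _).mpr h)⟩
      exact Nat.Coprime.pow_right ℓ ((hp.coprime_iff_not_dvd.mpr (hnotdvd a h)).symm)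
  -- the Jacobi symbol only depends on the residue mod K
  have hval : ∀ a : ℕ, jacobiSym (a : ℤ) (p ^ ℓ) =
      jacobiSym (((((a : ℕ) : ZMod K)).val : ℕ) : ℤ) (p ^ ℓ) := by
    intro a
    rw [jacobiSym.pow_right, jacobiSym.pow_right]
    congr 1
    apply jacobiSym.mod_left'
    rw [ZMod.val_natCast]
    have h : a % p = (a % K) % p := (Nat.mod_mod_of_dvd a (dvd_pow_self p (by omega))).symm
    calc (a : ℤ) % (p : ℤ) = ((a % p : ℕ) : ℤ) := (Int.natCast_mod a p).symm
      _ = ((a % K % p : ℕ) : ℤ) := by rw [← h]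
      _ = ((a % K : ℕ) : ℤ) % (p : ℤ) := Int.natCast_mod _ p
  -- evaluate the final Jacobi symbol
  have hjac : jacobiSym ((u.val : ℕ) : ℤ) (p ^ ℓ) = jacobiSym (nstar * mstar) (p ^ ℓ) := by
    have hcu : ((u.val : ℕ) : ZMod K) = u := by rw [ZMod.natCast_val, ZMod.cast_id]
    have hc : ((u.val : ℕ) : ZMod K) * (nstar : ZMod K) = (mstar : ZMod K) := (hQu _).mpr hcu
    have h2 : (K : ℤ) ∣ (u.val : ℤ) * nstar - mstar := by
      rw [← ZMod.intCast_zmod_eq_zero_iff_dvd]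
      push_cast
      rw [sub_eq_zero]
      exact hc
    have hp2 : (p : ℤ) ∣ (u.val : ℤ) * nstar - mstar := hpK.trans h2
    have hmod : ((u.val : ℤ) * (nstar * nstar)) % (p : ℤ) = (nstar * mstar) % (p : ℤ) := by
      have h5 : (p : ℤ) ∣ nstar * mstar - (u.val : ℤ) * (nstar * nstar) := by
        have h6 := hp2.mul_left nstar
        have h7 : nstar * mstar - (u.val : ℤ) * (nstar * nstar)
            = -(nstar * ((u.val : ℤ) * nstar - mstar)) := by ring
        rw [h7]
        exact dvd_neg.mpr h6
      exact Int.modEq_iff_dvd.mpr h5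
    have hsq : jacobiSym nstar p ^ 2 = 1 :=
      jacobiSym.sq_one (Int.isCoprime_iff_gcd_eq_one.mp hcop.symm)
    have hbase : jacobiSym ((u.val : ℕ) : ℤ) p = jacobiSym (nstar * mstar) p := by
      calc jacobiSym ((u.val : ℕ) : ℤ) p
          = jacobiSym ((u.val : ℕ) : ℤ) p * jacobiSym nstar p ^ 2 := by rw [hsq, mul_one]
        _ = jacobiSym (((u.val : ℕ) : ℤ) * (nstar * nstar)) p := by
            rw [jacobiSym.mul_left, jacobiSym.mul_left, sq]
        _ = jacobiSym (nstar * mstar) p := jacobiSym.mod_left' hmod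
    rw [jacobiSym.pow_right, jacobiSym.pow_right, hbase]
  -- now compute the sum
  calc Csum n m (p ^ ℓ)
      = ∑ a ∈ Finset.range (K * p ^ j),
          (fun x : ZMod K => if x = u then jacobiSym ((x.val : ℕ) : ℤ) (p ^ ℓ) else 0)
            ((a : ℕ) : ZMod K) := by
        unfold Csum
        rw [show Finset.range (p ^ ℓ) = Finset.range (K * p ^ j) from congrArg _ hsplit]
        refine Finset.sum_congr rfl fun a _ => ?_
        by_cases h : ((a : ℕ) : ZMod K) = u
        · rw [if_pos ((hPQ a).mpr h)]
          simp only [if_pos h]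
          exact hval a
        · rw [if_neg (fun hc => h ((hPQ a).mp hc))]
          simp only [if_neg h]
    _ = (p ^ j : ℕ) * ∑ x : ZMod K,
          (if x = u then jacobiSym ((x.val : ℕ) : ℤ) (p ^ ℓ) else 0) :=
        by
        have := sum_range_mul_zmod K (p ^ j)
          (fun x : ZMod K => if x = u then jacobiSym ((x.val : ℕ) : ℤ) (p ^ ℓ) else 0)
        simpa using this
    _ = (p ^ j : ℕ) * jacobiSym ((u.val : ℕ) : ℤ) (p ^ ℓ) := by
        rw [Finset.sum_ite_eq' Finset.univ u
          (fun x : ZMod K => jacobiSym ((x.val : ℕ) : ℤ) (p ^ ℓ))]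
        simp
    _ = jacobiSym (nstar * mstar) (p ^ ℓ) * (p : ℤ) ^ j := by
        rw [hjac]
        push_cast
        ring
end

section
/- Let p be an odd prime, ℓ ≥ 1 an integer, and n, m integers. Suppose that there is no j with 0 ≤ j < ℓ such that p^j exactly divides both n and m (i.e., n = p^j n*, m = p^j m* with p ∤ n*m*), and suppose it is not the case that ℓ is even with p^ℓ | n and p^ℓ | m. Then C(n,m;p^ℓ) = 0. -/
open Finset

theorem exists_eq_pow_mul_of_dvd_sub_mul {R : Type*} [CommRing R] [IsDomain R] {p a : R}
    (hp : Prime p) {ℓ : ℕ} (ha : IsCoprime a (p ^ ℓ)) {n m : R} (h : p ^ ℓ ∣ m - a * n)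
    (hnm : ¬(p ^ ℓ ∣ n ∧ p ^ ℓ ∣ m)) :
    ∃ j < ℓ, ∃ n' m' : R, n = p ^ j * n' ∧ m = p ^ j * m' ∧ ¬p ∣ n' * m' := by
  induction ℓ generalizing n m with
  | zero => simp at hnm
  | succ ℓ ih =>
    have hpa : ¬p ∣ a := fun hpa =>
      hp.not_isUnit (ha.isUnit_of_dvd' hpa (dvd_pow_self p ℓ.succ_ne_zero))
    have hp_sub : p ∣ m - a * n := (dvd_pow_self p ℓ.succ_ne_zero).trans h
    by_cases hpn : p ∣ n
    · have hpm : p ∣ m := by simpa using dvd_add hp_sub (hpn.mul_left a)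
      obtain ⟨n₁, rfl⟩ := hpn
      obtain ⟨m₁, rfl⟩ := hpm
      have h₁ : p ^ ℓ ∣ m₁ - a * n₁ := by
        rw [pow_succ', show p * m₁ - a * (p * n₁) = p * (m₁ - a * n₁) by ring] at h
        exact (mul_dvd_mul_iff_left hp.ne_zero).1 h
      have hnm₁ : ¬(p ^ ℓ ∣ n₁ ∧ p ^ ℓ ∣ m₁) := fun ⟨hn, hm⟩ =>
        hnm ⟨pow_succ' p ℓ ▸ mul_dvd_mul_left p hn, pow_succ' p ℓ ▸ mul_dvd_mul_left p hm⟩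
      obtain ⟨j, hj, n', m', rfl, rfl, hpnm⟩ :=
        ih (pow_succ p ℓ ▸ ha).of_mul_right_left h₁ hnm₁
      exact ⟨j + 1, by omega, n', m', by ring, by ring, hpnm⟩
    · have hpm : ¬p ∣ m := fun hpm =>
        hpn ((hp.dvd_or_dvd (by simpa using dvd_sub hpm hp_sub)).resolve_left hpa)
      exact ⟨0, ℓ.succ_pos, n, m, by simp, by simp, fun h => (hp.dvd_or_dvd h).elim hpn hpm⟩

theorem sum_range_jacobiSym_eq_zero {N : ℕ} {b : ℤ} (hb : jacobiSym b N = -1) :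
    ∑ a ∈ range N, jacobiSym a N = 0 := by
  have hN : N ≠ 0 := by rintro rfl; simp at hb
  have : NeZero N := ⟨hN⟩
  have hbN : b.gcd N = 1 := by
    by_contra h
    rw [jacobiSym.eq_zero_iff.2 ⟨hN, h⟩] at hb
    exact absurd hb (by decide)
  have hbu : IsUnit (b : ZMod N) := by
    rw [ZMod.coe_int_isUnit_iff_isCoprime, Int.isCoprime_iff_gcd_eq_one, Int.gcd_comm, hbN]
  set f : ZMod N → ℤ := fun x => jacobiSym x.val N
  have hsum : ∑ a ∈ range N, jacobiSym a N = ∑ x, f x :=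
    sum_nbij' (fun a => (a : ZMod N)) ZMod.val (fun _ _ => mem_univ _)
      (fun x _ => mem_range.2 (ZMod.val_lt x))
      (fun a ha => ZMod.val_natCast_of_lt (mem_range.1 ha)) (fun x _ => ZMod.natCast_zmod_val x)
      (fun a ha => by simp only [f, ZMod.val_natCast_of_lt (mem_range.1 ha)])
  have htwist : ∀ x, f (b * x) = -f x := fun x => by
    have hcast : (b : ZMod N) * x = ((b * x.val : ℤ) : ZMod N) := by
      push_cast [ZMod.natCast_zmod_val]; rfl
    simp only [f, hcast, ZMod.val_intCast]
    rw [← jacobiSym.mod_left, jacobiSym.mul_left, hb, neg_one_mul]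
  have hneg : ∑ x, -f x = ∑ x, f x := Fintype.sum_bijective _
    (IsUnit.isUnit_iff_mulLeft_bijective.1 hbu) _ _ fun x => (htwist x).symm
  rw [hsum]
  linarith [sum_neg_distrib (s := univ) (f := f)]

theorem exists_jacobiSym_prime_pow_eq_neg_one {p : ℕ} [Fact p.Prime] (hp2 : p ≠ 2) {ℓ : ℕ}
    (hℓ : Odd ℓ) : ∃ b : ℤ, jacobiSym b (p ^ ℓ) = -1 := by
  obtain ⟨x, hx⟩ := FiniteField.exists_nonsquare (F := ZMod p) (by rwa [ZMod.ringChar_zmod_n])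
  refine ⟨x.val, ?_⟩
  rw [jacobiSym.pow_right, ZMod.nonsquare_iff_jacobiSym_eq_neg_one.2 (by simpa using hx),
    hℓ.neg_one_pow]

theorem Csum_eq_zero_of_forall_not_modEq {n m : ℤ} {N : ℕ}
    (h : ∀ a : ℕ, a.Coprime N → ¬(a : ℤ) * n ≡ m [ZMOD N]) : Csum n m N = 0 :=
  sum_eq_zero fun a _ => if_neg fun ha => h a ha.1 ha.2

theorem Csum_eq_sum_jacobiSym_of_dvd {n m : ℤ} {N : ℕ} (hn : (N : ℤ) ∣ n) (hm : (N : ℤ) ∣ m) :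
    Csum n m N = ∑ a ∈ range N, jacobiSym a N := by
  refine sum_congr rfl fun a ha => ?_
  have hmod : (a : ℤ) * n ≡ m [ZMOD N] :=
    (Int.modEq_zero_iff_dvd.2 (hn.mul_left _)).trans (Int.modEq_zero_iff_dvd.2 hm).symm
  by_cases hcop : a.Coprime N
  · exact if_pos ⟨hcop, hmod⟩
  · rw [if_neg fun h => hcop h.1, eq_comm, jacobiSym.eq_zero_iff, Int.gcd_natCast_natCast]
    exact ⟨(Nat.zero_lt_of_lt (mem_range.1 ha)).ne', hcop⟩

theorem Csum_prime_pow_vanish_general (p : ℕ) (hp : p.Prime) (hpodd : Odd p)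
    (ℓ : ℕ) (n m : ℤ)
    (h1 : ¬ ∃ j : ℕ, j < ℓ ∧ ∃ nstar mstar : ℤ,
        n = (p : ℤ) ^ j * nstar ∧ m = (p : ℤ) ^ j * mstar ∧ ¬ (p : ℤ) ∣ nstar * mstar)
    (h2 : ¬ (Even ℓ ∧ (p : ℤ) ^ ℓ ∣ n ∧ (p : ℤ) ^ ℓ ∣ m)) :
    Csum n m (p ^ ℓ) = 0 := by
  have := Fact.mk hp
  by_cases hdvd : (p : ℤ) ^ ℓ ∣ n ∧ (p : ℤ) ^ ℓ ∣ m
  · have hℓ : Odd ℓ := Nat.not_even_iff_odd.1 fun he => h2 ⟨he, hdvd⟩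
    have hp2 : p ≠ 2 := by rintro rfl; exact Nat.not_odd_iff_even.2 even_two hpodd
    obtain ⟨b, hb⟩ := exists_jacobiSym_prime_pow_eq_neg_one hp2 hℓ
    rw [Csum_eq_sum_jacobiSym_of_dvd (by exact_mod_cast hdvd.1) (by exact_mod_cast hdvd.2)]
    exact sum_range_jacobiSym_eq_zero hb
  · refine Csum_eq_zero_of_forall_not_modEq fun a ha hmod => h1 ?_
    have hcop : IsCoprime (a : ℤ) ((p : ℤ) ^ ℓ) := by exact_mod_cast Nat.isCoprime_iff_coprime.2 ha
    exact exists_eq_pow_mul_of_dvd_sub_mul (Nat.prime_iff_prime_int.1 hp) hcop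
      (by exact_mod_cast hmod.dvd) hdvd

/-- `C(n,m;p^ℓ) = 0` outside of the two cases described in
Statements 1 and 2. -/
theorem Csum_prime_pow_vanish (p : ℕ) (hp : p.Prime) (hpodd : Odd p)
    (ℓ : ℕ) (hℓ : 1 ≤ ℓ) (n m : ℤ)
    (h1 : ¬ ∃ j : ℕ, j < ℓ ∧ ∃ nstar mstar : ℤ,
        n = (p : ℤ) ^ j * nstar ∧ m = (p : ℤ) ^ j * mstar ∧ ¬ (p : ℤ) ∣ nstar * mstar)
    (h2 : ¬ (Even ℓ ∧ (p : ℤ) ^ ℓ ∣ n ∧ (p : ℤ) ^ ℓ ∣ m)) :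
    Csum n m (p ^ ℓ) = 0 :=
  Csum_prime_pow_vanish_general p hp hpodd ℓ n m h1 h2
end

section
/- Let η ≥ 5 be an odd integer and n, m integers. If n = 2^j n* and m = 2^j m* with n*, m* odd and j + 2 < η, then C_±(n,m;2^η) = ψ_±(n*m*)·2^j; in all other cases C_±(n,m;2^η) = 0. -/
/-- `ψ₊` for parameter `η`: the trivial character (mod 2) if `η` is even, and `χ₈` if `η` is
odd, viewed as a function on `ℤ`. -/
noncomputable def psiPlus (η : ℕ) (a : ℤ) : ℤ :=
  if Even η then (if Odd a then 1 else 0) else ZMod.χ₈ (a : ZMod 8)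

/-- `ψ₋ = ψ₊ · χ₋₄`. -/
noncomputable def psiMinus (η : ℕ) (a : ℤ) : ℤ :=
  psiPlus η a * ZMod.χ₄ (a : ZMod 4)

/-- `Cpm ψ n m η = Σ_{a ∈ (ℤ/2^ηℤ)ˣ, a·n ≡ m (mod 2^η)} ψ(a)`. -/
noncomputable def Cpm (ψ : ℤ → ℤ) (n m : ℤ) (η : ℕ) : ℤ :=
  ∑ a ∈ Finset.range (2 ^ η),
    if Nat.Coprime a (2 ^ η) ∧ (a : ℤ) * n ≡ m [ZMOD ((2 : ℤ) ^ η)] then ψ a else 0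

/-
Both `ψ₊ = χ₈` and `ψ₋ = χ₈'` are characters mod 8 with `χ (x + 4) = -χ x`. Extend the summand of
`Cpm` to an odd-supported function on `ℤ`. If `2 ^ η ∣ 4 n`, it is antiperiodic under `a ↦ a + 4`
and hence `2 ^ η`-periodic, so its sum over a full period equals its own negative and vanishes.
Otherwise `n = 2 ^ j n*` with `n*` odd and `j + 2 < η`; any solution `a` forces `m = 2 ^ j m*`
with `m*` odd, and the solutions are one residue class modulo `2 ^ (η - j)`, which meets
`[0, 2 ^ η)` in `2 ^ j` points. As every odd square is `1` mod `8` and `8 ∣ 2 ^ (η - j)`, each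
solution satisfies `χ a = χ (a n* n*) = χ (m* n*)`.
-/
open Finset Function

theorem Function.Periodic.sum_range_comp_add_one {M : Type*} [AddCancelCommMonoid M] {f : ℤ → M}
    {N : ℕ} (hf : Periodic f N) : ∑ a ∈ range N, f (a + 1) = ∑ a ∈ range N, f a := by
  have h := (sum_range_succ' (fun a : ℕ => f a) N).symm.trans (sum_range_succ _ N)
  push_cast at h
  rwa [← zero_add (N : ℤ), hf, add_left_inj] at h

theorem Function.Periodic.sum_range_comp_add {M : Type*} [AddCancelCommMonoid M] {f : ℤ → M}
    {N : ℕ} (hf : Periodic f N) (c : ℕ) : ∑ a ∈ range N, f (a + c) = ∑ a ∈ range N, f a := by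
  induction c with
  | zero => simp
  | succ c ih =>
    push_cast
    simpa only [add_right_comm, ← add_assoc] using
      (hf.add_const (c : ℤ)).sum_range_comp_add_one.trans ih

theorem Int.exists_eq_two_pow_mul_odd {n : ℤ} (hn : n ≠ 0) :
    ∃ (k : ℕ) (m : ℤ), n = 2 ^ k * m ∧ Odd m :=
  let ⟨m, h, hm⟩ := (Int.finiteMultiplicity_iff.2 ⟨by norm_num, hn⟩).exists_eq_pow_mul_and_not_dvd
  ⟨_, m, h, Int.not_even_iff_odd.1 (even_iff_two_dvd.not.2 hm)⟩

theorem Int.odd_of_mul_modEq {a n m d : ℤ} (hd : 2 ∣ d) (hm : Odd m) (h : a * n ≡ m [ZMOD d]) :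
    Odd a := by
  have h2 : a * n % 2 = m % 2 := h.of_dvd hd
  exact (Int.odd_mul.1 (Int.odd_iff.2 (h2.trans (Int.odd_iff.1 hm)))).1

theorem Int.exists_eq_two_pow_mul_odd_of_mul_modEq {a n m : ℤ} {j η : ℕ} (ha : Odd a) (hn : Odd n)
    (hj : j < η) (h : a * (2 ^ j * n) ≡ m [ZMOD 2 ^ η]) : ∃ m' : ℤ, m = 2 ^ j * m' ∧ Odd m' := by
  obtain ⟨t, ht⟩ := h.dvd
  refine ⟨a * n + 2 ^ (η - j) * t, ?_,
    (ha.mul hn).add_even ((Int.even_pow.2 ⟨even_two, by omega⟩).mul_right t)⟩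
  linear_combination ht - t * pow_mul_pow_sub (2 : ℤ) hj.le

theorem MulChar.apply_eq_apply_mul_of_mul_modEq {R : Type*} [CommMonoidWithZero R]
    (χ : MulChar (ZMod 8) R) {a n m : ℤ} (hn : Odd n) (h : a * n ≡ m [ZMOD 8]) :
    χ a = χ (n * m : ℤ) := by
  have hsq : ((n * n : ℤ) : ZMod 8) = 1 := by
    rw [← Int.cast_one, eq_comm, ZMod.intCast_eq_intCast_iff_dvd_sub, ← sq]
    exact_mod_cast Int.eight_dvd_sq_sub_one_of_odd hn
  have hmod : ((a * n : ℤ) : ZMod 8) = m := (ZMod.intCast_eq_intCast_iff _ _ 8).2 h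
  push_cast at hsq hmod ⊢
  calc χ a = χ (a * (n * n)) := by rw [hsq, mul_one]
    _ = χ (n * m) := by simp only [← hmod, map_mul, mul_left_comm]

theorem Nat.card_filter_range_mul_modEq_of_isCoprime {d : ℕ} [NeZero d] (k : ℕ) {n : ℤ}
    (hn : IsCoprime n d) (m : ℤ) : #{a ∈ range (k * d) | ((a : ℕ) : ℤ) * n ≡ m [ZMOD d]} = k := by
  set r := ((m : ZMod d) * ((ZMod.unitOfIsCoprime n hn)⁻¹ : (ZMod d)ˣ)).val
  have hsol : ∀ a : ℕ, (a : ℤ) * n ≡ m [ZMOD d] ↔ a ≡ r [MOD d] := fun a => by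
    rw [← ZMod.intCast_eq_intCast_iff, ← ZMod.natCast_eq_natCast_iff, ZMod.natCast_zmod_val,
      Units.eq_mul_inv_iff_mul_eq, ZMod.coe_unitOfIsCoprime]
    push_cast
    rfl
  rw [filter_congr fun a _ => hsol a, ← Nat.count_eq_card_filter_range,
    Nat.count_modEq_card _ (NeZero.pos d)]
  simp [NeZero.ne d]

def cpmSummand (ψ : ℤ → ℤ) (n m : ℤ) (η : ℕ) (a : ℤ) : ℤ :=
  if Odd a ∧ a * n ≡ m [ZMOD 2 ^ η] then ψ a else 0

theorem Cpm_eq_sum_cpmSummand (ψ : ℤ → ℤ) (n m : ℤ) {η : ℕ} (hη : η ≠ 0) :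
    Cpm ψ n m η = ∑ a ∈ range (2 ^ η), cpmSummand ψ n m η a := by
  refine sum_congr rfl fun a _ => ?_
  simp only [cpmSummand, Nat.coprime_pow_right_iff (Nat.pos_of_ne_zero hη), Nat.coprime_two_right,
    Int.odd_coe_nat]

theorem Cpm_eq_zero_of_forall_not_modEq (ψ : ℤ → ℤ) {n m : ℤ} {η : ℕ} (hη : η ≠ 0)
    (h : ∀ a : ℤ, Odd a → ¬ a * n ≡ m [ZMOD 2 ^ η]) : Cpm ψ n m η = 0 := by
  rw [Cpm_eq_sum_cpmSummand ψ n m hη]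
  exact sum_eq_zero fun a _ => if_neg fun ⟨ha, hmod⟩ => h a ha hmod

theorem antiperiodic_cpmSummand {ψ : ℤ → ℤ} (hψ : Antiperiodic ψ 4) {n : ℤ} (m : ℤ) {η : ℕ}
    (h : (2 : ℤ) ^ η ∣ 4 * n) : Antiperiodic (cpmSummand ψ n m η) 4 := fun a => by
  have hshift : (a + 4) * n ≡ a * n [ZMOD 2 ^ η] :=
    (Int.modEq_iff_dvd.2 (by simpa [add_mul] using h.neg_right)).symm
  have hsol : (a + 4) * n ≡ m [ZMOD 2 ^ η] ↔ a * n ≡ m [ZMOD 2 ^ η] :=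
    ⟨hshift.symm.trans, hshift.trans⟩
  have hodd : Odd (a + 4) ↔ Odd a := by simp [Int.odd_add, show Even (4 : ℤ) from ⟨2, rfl⟩]
  simp only [cpmSummand, hodd, hsol, hψ a]
  split_ifs <;> simp

theorem Cpm_eq_zero_of_antiperiodic {ψ : ℤ → ℤ} (hψ : Antiperiodic ψ 4) {n : ℤ} (m : ℤ) {η : ℕ}
    (hη : 3 ≤ η) (h : (2 : ℤ) ^ η ∣ 4 * n) : Cpm ψ n m η = 0 := by
  have hf : Antiperiodic (cpmSummand ψ n m η) 4 := antiperiodic_cpmSummand hψ m h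
  have hper : Periodic (cpmSummand ψ n m η) (2 ^ η : ℕ) := by
    have h2η : ((2 ^ η : ℕ) : ℤ) = (2 ^ (η - 3) : ℕ) * (2 * 4) := by
      push_cast
      rw [← pow_sub_mul_pow 2 hη]
      norm_num
    rw [h2η]
    exact hf.periodic_two_mul.nat_mul _
  have hsum := hper.sum_range_comp_add 4
  simp only [Nat.cast_ofNat, hf _, sum_neg_distrib] at hsum
  rw [Cpm_eq_sum_cpmSummand ψ n m (by omega)]
  linarith

theorem cpmSummand_two_pow_mul (χ : MulChar (ZMod 8) ℤ) {η j : ℕ} (hj : j + 3 ≤ η) {n m : ℤ}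
    (hn : Odd n) (hm : Odd m) (a : ℤ) :
    cpmSummand (fun a => χ a) (2 ^ j * n) (2 ^ j * m) η a =
      if a * n ≡ m [ZMOD 2 ^ (η - j)] then χ (n * m : ℤ) else 0 := by
  have h8 : (8 : ℤ) ∣ 2 ^ (η - j) := by
    rw [show (8 : ℤ) = 2 ^ 3 by norm_num]; exact pow_dvd_pow 2 (by omega)
  rw [cpmSummand, ← pow_mul_pow_sub 2 (show j ≤ η by omega), mul_left_comm]
  simp only [Int.ModEq.mul_left_cancel_iff' (pow_ne_zero j two_ne_zero)]
  by_cases h : a * n ≡ m [ZMOD 2 ^ (η - j)]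
  · rw [if_pos ⟨Int.odd_of_mul_modEq ((by norm_num : (2 : ℤ) ∣ 8).trans h8) hm h, h⟩, if_pos h,
      χ.apply_eq_apply_mul_of_mul_modEq hn (h.of_dvd h8)]
  · simp [h]

theorem Cpm_two_pow_mul (χ : MulChar (ZMod 8) ℤ) {η j : ℕ} (hj : j + 3 ≤ η) {n m : ℤ}
    (hn : Odd n) (hm : Odd m) :
    Cpm (fun a => χ a) (2 ^ j * n) (2 ^ j * m) η = χ (n * m : ℤ) * 2 ^ j := by
  have hcop : IsCoprime n ((2 ^ (η - j) : ℕ) : ℤ) := by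
    push_cast
    exact (Int.isCoprime_two_right.2 hn).pow_right
  rw [Cpm_eq_sum_cpmSummand _ _ _ (by omega), ← pow_mul_pow_sub 2 (show j ≤ η by omega)]
  have hcard := Nat.card_filter_range_mul_modEq_of_isCoprime (2 ^ j) hcop m
  push_cast at hcard
  simp only [cpmSummand_two_pow_mul χ hj hn hm, sum_ite, sum_const, smul_zero, add_zero, hcard]
  rw [nsmul_eq_mul, mul_comm, Nat.cast_pow, Nat.cast_ofNat]

theorem psiPlus_of_odd {η : ℕ} (hη : Odd η) : psiPlus η = fun a : ℤ => ZMod.χ₈ a :=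
  funext fun _ => if_neg (Nat.not_even_iff_odd.2 hη)

theorem psiMinus_of_odd {η : ℕ} (hη : Odd η) : psiMinus η = fun a : ℤ => ZMod.χ₈' a :=
  funext fun a => by rw [psiMinus, psiPlus_of_odd hη, ZMod.χ₈'_int_eq_χ₄_mul_χ₈, mul_comm]

theorem antiperiodic_intCast_of_add_four {χ : MulChar (ZMod 8) ℤ} (hχ : ∀ x, χ (x + 4) = -χ x) :
    Antiperiodic (fun a : ℤ => χ a) 4 := fun a => by
  simpa using hχ a

theorem ZMod.χ₈_add_four : ∀ x : ZMod 8, χ₈ (x + 4) = -χ₈ x := by decide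

theorem ZMod.χ₈'_add_four : ∀ x : ZMod 8, χ₈' (x + 4) = -χ₈' x := by decide

/-- evaluation of `C_±(n,m;2^η)` for odd `η ≥ 5`. -/
theorem Cpm_odd_eta (η : ℕ) (hη : 5 ≤ η) (hodd : Odd η) (n m : ℤ) :
    (∀ j : ℕ, ∀ nstar mstar : ℤ, n = 2 ^ j * nstar → m = 2 ^ j * mstar →
      Odd nstar → Odd mstar → j + 2 < η →
        Cpm (psiPlus η) n m η = psiPlus η (nstar * mstar) * 2 ^ j ∧
        Cpm (psiMinus η) n m η = psiMinus η (nstar * mstar) * 2 ^ j) ∧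
    ((¬ ∃ j : ℕ, ∃ nstar mstar : ℤ, n = 2 ^ j * nstar ∧ m = 2 ^ j * mstar ∧
        Odd nstar ∧ Odd mstar ∧ j + 2 < η) →
      Cpm (psiPlus η) n m η = 0 ∧ Cpm (psiMinus η) n m η = 0) := by
  simp only [psiPlus_of_odd hodd, psiMinus_of_odd hodd]
  refine ⟨fun j nstar mstar hn hm hnstar hmstar hj => ?_, fun hne => ?_⟩
  · subst hn hm
    exact ⟨Cpm_two_pow_mul _ hj hnstar hmstar, Cpm_two_pow_mul _ hj hnstar hmstar⟩
  suffices ∀ ψ : ℤ → ℤ, Antiperiodic ψ 4 → Cpm ψ n m η = 0 from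
    ⟨this _ (antiperiodic_intCast_of_add_four ZMod.χ₈_add_four),
      this _ (antiperiodic_intCast_of_add_four ZMod.χ₈'_add_four)⟩
  intro ψ hψ
  rcases eq_or_ne n 0 with rfl | hn
  · exact Cpm_eq_zero_of_antiperiodic hψ m (by omega) (by simp)
  obtain ⟨j, nstar, rfl, hnstar⟩ := Int.exists_eq_two_pow_mul_odd hn
  by_cases hj : j + 2 < η
  · refine Cpm_eq_zero_of_forall_not_modEq ψ (by omega) fun a ha hsol => hne ?_
    obtain ⟨mstar, rfl, hmstar⟩ := Int.exists_eq_two_pow_mul_odd_of_mul_modEq ha hnstar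
      (by omega) hsol
    exact ⟨j, nstar, mstar, rfl, rfl, hnstar, hmstar, hj⟩
  · refine Cpm_eq_zero_of_antiperiodic hψ m (by omega) ?_
    exact (pow_dvd_pow 2 (by omega : η ≤ j + 2)).trans ⟨nstar, by ring⟩
end

section
/- Let q be an odd prime, r ≥ 0 an integer, and c = 2^η·d with η ≥ 4, d an odd positive integer, and gcd(q,d) = 1. If B_r(n,m;c) ≠ 0 for integers n, m, then 4 divides gcd(n,m) and gcd(n,c) = gcd(m,c). -/
/-- `e(x) = exp(2πix)`. -/
noncomputable def eC (x : ℝ) : ℂ := Complex.exp (2 * (Real.pi : ℂ) * Complex.I * (x : ℂ))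

/-- The Kloosterman sum `S(a,b;c) = Σ_{x ∈ (ℤ/cℤ)ˣ} e((a·x + b·x̄)/c)`. -/
noncomputable def kloos (a b : ℤ) (c : ℕ) : ℂ :=
  ∑ x ∈ Finset.range c,
    if Nat.Coprime x c then
      eC (((a * (x : ℤ) + b * ((((x : ZMod c)⁻¹).val : ℕ) : ℤ) : ℤ) : ℝ) / (c : ℝ))
    else 0

/-- `B_r(n,m;c) = Σ_{α,β mod c} e(−2uαβ/c)·S(uα², uβ²; c)·e((αn + βm)/c)`, where `u` is an
inverse of `q^{4+r}` modulo `c` (passed as a parameter). -/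
noncomputable def Bsum (u : ℤ) (n m : ℤ) (c : ℕ) : ℂ :=
  ∑ α ∈ Finset.range c, ∑ β ∈ Finset.range c,
    eC ((((-2) * u * (α : ℤ) * (β : ℤ) : ℤ) : ℝ) / (c : ℝ)) *
      kloos (u * (α : ℤ) ^ 2) (u * (β : ℤ) ^ 2) c *
      eC ((((α : ℤ) * n + (β : ℤ) * m : ℤ) : ℝ) / (c : ℝ))

/-!
Write `t = c/4` and `ψ z = e(z/c)` on `ℤ/cℤ`. Units mod `c` are odd and `4t = 0`, so the
substitution `x ↦ (1 + 2t)x` shows `S(a, b) = ψ(2t(a + b)) S(a, b)`, while moving `a` by `2ts`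
multiplies `S(a, b)` by `ψ(2ts)`. Since `16 ∣ c` gives `t² = 0`, and `z² ≡ z mod 2`, the shift
`α ↦ α + t` multiplies every term of `B` by `ψ(tn)`; hence `B ≠ 0` forces `ψ(tn) = 1`, i.e.
`4 ∣ n`, and `m` follows by the symmetry of `B` in `(n, m)`. Completing the square
`uxα² - 2uαβ + ux⁻¹β² = ux(α - x⁻¹β)²` inside the Kloosterman sum leaves a complete character
sum in `β`, which vanishes unless `n ≡ -xm (mod c)` for some unit `x`; then
`gcd(n, c) = gcd(m, c)`.
-/

open Finset

local notation "ψ" => ZMod.stdAddChar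

section Bridge

variable {c : ℕ} [NeZero c]

lemma eC_intCast_div (a : ℤ) : eC (a / c) = ψ (a : ZMod c) := by
  rw [ZMod.stdAddChar_coe, eC]
  push_cast
  ring_nf

lemma sum_range_natCast {M : Type*} [AddCommMonoid M] (f : ZMod c → M) :
    ∑ i ∈ range c, f i = ∑ z, f z :=
  sum_nbij' (↑) ZMod.val (by simp) (by simp [ZMod.val_lt])
    (fun i hi => ZMod.val_cast_of_lt (mem_range.1 hi)) (fun z _ => ZMod.natCast_zmod_val z)
    (fun _ _ => rfl)

lemma sum_units_eq_sum_ite {M R : Type*} [Monoid M] [Fintype M] [Fintype Mˣ]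
    [DecidablePred (IsUnit : M → Prop)] [AddCommMonoid R] (f : M → R) :
    ∑ x : Mˣ, f x = ∑ z, if IsUnit z then f z else 0 :=
  sum_of_injOn (↑) Units.val_injective.injOn (by simp)
    (fun z _ hz => if_neg fun hu => hz ⟨hu.unit, by simp⟩) (fun x _ => (if_pos x.isUnit).symm)

noncomputable def kloosterman (a b : ZMod c) : ℂ :=
  ∑ x : (ZMod c)ˣ, ψ (a * (x : ZMod c) + b * ((x⁻¹ : (ZMod c)ˣ) : ZMod c))

lemma kloos_eq_kloosterman (a b : ℤ) : kloos a b c = kloosterman (a : ZMod c) b := by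
  classical
  simp_rw [kloosterman, ← ZMod.inv_coe_unit]
  rw [sum_units_eq_sum_ite (fun z : ZMod c => ψ ((a : ZMod c) * z + (b : ZMod c) * z⁻¹)),
    ← sum_range_natCast, kloos]
  refine sum_congr rfl fun i _ => ?_
  simp_rw [ZMod.isUnit_iff_coprime]
  split_ifs
  · rw [eC_intCast_div]
    push_cast
    rw [ZMod.natCast_zmod_val]
  · rfl

noncomputable def bTerm (u n m α β : ZMod c) : ℂ :=
  ψ (-2 * u * α * β) * kloosterman (u * α ^ 2) (u * β ^ 2) * ψ (α * n + β * m)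

noncomputable def bSum (u n m : ZMod c) : ℂ :=
  ∑ α, ∑ β, bTerm u n m α β

lemma Bsum_eq_bSum (u n m : ℤ) : Bsum u n m c = bSum (u : ZMod c) n m := by
  simp_rw [Bsum, bSum, bTerm, ← sum_range_natCast, eC_intCast_div, kloos_eq_kloosterman]
  push_cast
  rfl

end Bridge

namespace ZMod

variable {c : ℕ} [NeZero c]

lemma odd_coe_unit (h : 2 ∣ c) (x : (ZMod c)ˣ) : Odd (x : ZMod c) := by
  rw [← ZMod.natCast_zmod_val (x : ZMod c)]
  exact (Nat.coprime_two_right.mp ((ZMod.val_coe_unit_coprime x).coprime_dvd_right h)).natCast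

lemma even_mul_succ_self (z : ZMod c) : Even (z * (z + 1)) := by
  rw [← ZMod.natCast_zmod_val z]
  exact_mod_cast (Nat.even_mul_succ_self z.val).natCast

end ZMod

section Quarter

variable {c : ℕ}

def quarter (c : ℕ) : ZMod c := ((c / 4 : ℕ) : ZMod c)

lemma four_mul_quarter (h : 4 ∣ c) : 4 * quarter c = 0 := by
  obtain ⟨k, rfl⟩ := h
  rw [quarter, Nat.mul_div_cancel_left k four_pos]
  exact_mod_cast ZMod.natCast_self (4 * k)

lemma quarter_mul_self (h : 16 ∣ c) : quarter c * quarter c = 0 := by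
  obtain ⟨k, rfl⟩ := h
  rw [quarter, show 16 * k / 4 = 4 * k by omega, ← Nat.cast_mul, ZMod.natCast_eq_zero_iff]
  exact ⟨k, by ring⟩

lemma four_dvd_of_quarter_mul_eq_zero [NeZero c] (h : 4 ∣ c) {n : ℤ} (hn : quarter c * n = 0) :
    4 ∣ n := by
  obtain ⟨k, rfl⟩ := h
  have hk : (k : ℤ) ≠ 0 := by
    have := NeZero.ne (4 * k)
    omega
  rw [quarter, Nat.mul_div_cancel_left k four_pos, ← Int.cast_natCast, ← Int.cast_mul,
    ZMod.intCast_zmod_eq_zero_iff_dvd] at hn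
  push_cast at hn
  rwa [mul_comm 4, mul_dvd_mul_iff_left hk] at hn

lemma two_mul_quarter_mul_of_even (h : 4 ∣ c) {z : ZMod c} (hz : Even z) :
    2 * quarter c * z = 0 := by
  obtain ⟨w, rfl⟩ := hz
  linear_combination w * four_mul_quarter h

lemma two_mul_quarter_mul_unit [NeZero c] (h : 4 ∣ c) (x : (ZMod c)ˣ) :
    2 * quarter c * x = 2 * quarter c := by
  linear_combination two_mul_quarter_mul_of_even h
    ((ZMod.odd_coe_unit (dvd_trans ⟨2, rfl⟩ h) x).sub_odd odd_one)

lemma two_mul_quarter_mul_sq [NeZero c] (h : 4 ∣ c) (z : ZMod c) :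
    2 * quarter c * z ^ 2 = 2 * quarter c * z := by
  linear_combination
    two_mul_quarter_mul_of_even h (ZMod.even_mul_succ_self z) - z * four_mul_quarter h

end Quarter

section Kloosterman

variable {c : ℕ} [NeZero c]

lemma kloosterman_comm (a b : ZMod c) : kloosterman a b = kloosterman b a :=
  Fintype.sum_equiv (Equiv.inv _) _ _ fun x => by simp [add_comm]

lemma kloosterman_add_two_mul_quarter_mul (h : 4 ∣ c) (a b s : ZMod c) :
    kloosterman (a + 2 * quarter c * s) b = ψ (2 * quarter c * s) * kloosterman a b := by
  rw [kloosterman, kloosterman, mul_sum]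
  refine sum_congr rfl fun x _ => ?_
  rw [← AddChar.map_add_eq_mul]
  congr 1
  linear_combination s * two_mul_quarter_mul_unit h x

lemma stdAddChar_two_mul_quarter_mul_kloosterman (h : 4 ∣ c) (a b : ZMod c) :
    ψ (2 * quarter c * (a + b)) * kloosterman a b = kloosterman a b := by
  have hw : (1 + 2 * quarter c) * (1 + 2 * quarter c) = 1 := by
    linear_combination (1 + quarter c) * four_mul_quarter h
  let w : (ZMod c)ˣ := ⟨1 + 2 * quarter c, 1 + 2 * quarter c, hw, hw⟩
  rw [kloosterman, mul_sum]
  refine Fintype.sum_equiv (Equiv.mulRight w) _ _ fun x => ?_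
  rw [Equiv.coe_mulRight, ← AddChar.map_add_eq_mul, mul_inv_rev, Units.val_mul, Units.val_mul]
  congr 1
  change _ = a * (x * (1 + 2 * quarter c)) + b * ((1 + 2 * quarter c) * _)
  linear_combination -a * two_mul_quarter_mul_unit h x - b * two_mul_quarter_mul_unit h x⁻¹

end Kloosterman

section BSum

variable {c : ℕ} [NeZero c]

lemma bSum_comm (u n m : ZMod c) : bSum u n m = bSum u m n := by
  rw [bSum, sum_comm]
  refine sum_congr rfl fun β _ => sum_congr rfl fun α _ => ?_
  rw [bTerm, bTerm, kloosterman_comm]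
  ring_nf

lemma bTerm_add_quarter (h : 16 ∣ c) (u n m α β : ZMod c) :
    bTerm u n m (α + quarter c) β = ψ (quarter c * n) * bTerm u n m α β := by
  have h4 : 4 ∣ c := dvd_trans ⟨4, rfl⟩ h
  have hK := stdAddChar_two_mul_quarter_mul_kloosterman h4 (u * α ^ 2) (u * β ^ 2)
  have hphase : 2 * quarter c * (u * α ^ 2 + u * β ^ 2)
      = 2 * quarter c * (u * β) + 2 * quarter c * (u * α) := by
    linear_combination u * two_mul_quarter_mul_sq h4 α + u * two_mul_quarter_mul_sq h4 β
  have hsq : u * (α + quarter c) ^ 2 = u * α ^ 2 + 2 * quarter c * (u * α) := by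
    linear_combination u * quarter_mul_self h
  rw [hphase, AddChar.map_add_eq_mul] at hK
  rw [bTerm, bTerm, hsq, kloosterman_add_two_mul_quarter_mul h4,
    show -2 * u * (α + quarter c) * β = -2 * u * α * β + 2 * quarter c * (u * β) by
      linear_combination -(u * β) * four_mul_quarter h4,
    show (α + quarter c) * n + β * m = α * n + β * m + quarter c * n by ring]
  rw [AddChar.map_add_eq_mul _ (-2 * u * α * β), AddChar.map_add_eq_mul _ (α * n + β * m)]
  linear_combination ψ (-2 * u * α * β) * ψ (α * n + β * m) * ψ (quarter c * n) * hK

lemma four_dvd_of_bSum_ne_zero (h : 16 ∣ c) {u m : ZMod c} {n : ℤ} (hB : bSum u n m ≠ 0) :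
    4 ∣ n := by
  have h4 : 4 ∣ c := dvd_trans ⟨4, rfl⟩ h
  refine four_dvd_of_quarter_mul_eq_zero h4 (ZMod.injective_stdAddChar ?_)
  refine mul_right_cancel₀ hB ?_
  rw [AddChar.map_zero_eq_one, one_mul, bSum, mul_sum]
  simp_rw [mul_sum, ← bTerm_add_quarter h]
  exact Fintype.sum_equiv (Equiv.addRight _) _ _ fun _ => rfl

end BSum

section Gcd

variable {c : ℕ} [NeZero c]

lemma mul_kloosterman_mul (a b s s' : ZMod c) :
    ψ s * kloosterman a b * ψ s' =
      ∑ x : (ZMod c)ˣ,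
        ψ (a * (x : ZMod c) + b * ((x⁻¹ : (ZMod c)ˣ) : ZMod c) + s + s') := by
  rw [kloosterman, mul_sum, sum_mul]
  refine sum_congr rfl fun x _ => ?_
  rw [← AddChar.map_add_eq_mul, ← AddChar.map_add_eq_mul]
  ring_nf

lemma sum_stdAddChar_complete_square (u n m β : ZMod c) (x : (ZMod c)ˣ) :
    ∑ α, ψ (u * α ^ 2 * (x : ZMod c) + u * β ^ 2 * ((x⁻¹ : (ZMod c)ˣ) : ZMod c)
        + -2 * u * α * β + (α * n + β * m)) =
      ψ (β * (m + ((x⁻¹ : (ZMod c)ˣ) : ZMod c) * n)) *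
        ∑ α, ψ (u * (x : ZMod c) * α ^ 2 + α * n) := by
  rw [mul_sum]
  refine Fintype.sum_equiv (Equiv.subRight (((x⁻¹ : (ZMod c)ˣ) : ZMod c) * β)) _ _ fun α => ?_
  rw [Equiv.subRight_apply, ← AddChar.map_add_eq_mul]
  congr 1
  linear_combination (2 * u * α * β - u * β ^ 2 * ((x⁻¹ : (ZMod c)ˣ) : ZMod c)) * x.mul_inv

lemma bSum_eq_sum_units (u n m : ZMod c) :
    bSum u n m = ∑ x : (ZMod c)ˣ,
      (∑ β, ψ (β * (m + ((x⁻¹ : (ZMod c)ˣ) : ZMod c) * n))) *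
        ∑ α, ψ (u * (x : ZMod c) * α ^ 2 + α * n) := by
  simp_rw [bSum, bTerm, mul_kloosterman_mul]
  refine (sum_congr rfl fun α _ => sum_comm).trans (sum_comm.trans ?_)
  refine sum_congr rfl fun x _ => ?_
  rw [sum_comm, sum_mul]
  exact sum_congr rfl fun β _ => sum_stdAddChar_complete_square u n m β x

lemma exists_unit_of_bSum_ne_zero {u n m : ZMod c} (hB : bSum u n m ≠ 0) :
    ∃ x : (ZMod c)ˣ, n = x * m := by
  classical
  rw [bSum_eq_sum_units] at hB
  obtain ⟨x, -, hx⟩ := exists_ne_zero_of_sum_ne_zero hB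
  have hk : m + ((x⁻¹ : (ZMod c)ˣ) : ZMod c) * n = 0 := by
    by_contra hk
    simp [AddChar.sum_mulShift _ (ZMod.isPrimitive_stdAddChar c), hk] at hx
  refine ⟨-x, ?_⟩
  rw [Units.val_neg]
  linear_combination (x : ZMod c) * hk - n * x.mul_inv

end Gcd

lemma gcd_dvd_gcd_of_intCast_eq_mul {c : ℕ} {n m : ℤ} {v : ZMod c} (h : (n : ZMod c) = v * m) :
    Int.gcd m c ∣ Int.gcd n c := by
  rw [← ZMod.intCast_zmod_cast v, ← Int.cast_mul, ZMod.intCast_eq_intCast_iff_dvd_sub] at h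
  refine Int.dvd_gcd ?_ (Int.gcd_dvd_right _ _)
  have hm : (Int.gcd m c : ℤ) ∣ ZMod.cast v * m := (Int.gcd_dvd_left _ _).mul_left _
  simpa using hm.sub ((Int.gcd_dvd_right m c).trans h)

lemma gcd_eq_gcd_of_intCast_eq_unit_mul {c : ℕ} {n m : ℤ} (x : (ZMod c)ˣ)
    (h : (n : ZMod c) = x * m) : Int.gcd n c = Int.gcd m c :=
  Nat.dvd_antisymm
    (gcd_dvd_gcd_of_intCast_eq_mul (v := ((x⁻¹ : (ZMod c)ˣ) : ZMod c)) (by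
      rw [h, ← mul_assoc, Units.inv_mul, one_mul]))
    (gcd_dvd_gcd_of_intCast_eq_mul h)

theorem Bsum_ne_zero_conditions_general (η d : ℕ) (hη : 4 ≤ η) (c : ℕ) (hc : c = 2 ^ η * d)
    (u : ℤ) (n m : ℤ) (hB : Bsum u n m c ≠ 0) :
    4 ∣ Int.gcd n m ∧ Int.gcd n (c : ℤ) = Int.gcd m (c : ℤ) := by
  have h16 : 16 ∣ c := hc ▸ (pow_dvd_pow 2 hη).mul_right d
  have : NeZero c := ⟨by rintro rfl; simp [Bsum] at hB⟩
  rw [Bsum_eq_bSum] at hB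
  obtain ⟨x, hx⟩ := exists_unit_of_bSum_ne_zero hB
  have h4n : (4 : ℤ) ∣ n := four_dvd_of_bSum_ne_zero h16 hB
  have h4m : (4 : ℤ) ∣ m := four_dvd_of_bSum_ne_zero h16 (bSum_comm (c := c) _ _ _ ▸ hB)
  exact ⟨Int.dvd_gcd h4n h4m, gcd_eq_gcd_of_intCast_eq_unit_mul x hx⟩

/-- if `B_r(n,m;c) ≠ 0` for `c = 2^η·d`, `η ≥ 4`, `d` odd, `gcd(q,d) = 1`,
then `4 ∣ gcd(n,m)` and `gcd(n,c) = gcd(m,c)`. -/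
theorem Bsum_ne_zero_conditions (q : ℕ) (hq : q.Prime) (hqodd : Odd q) (r : ℕ)
    (η d : ℕ) (hη : 4 ≤ η) (hd : 0 < d) (hdodd : Odd d) (hqd : Nat.Coprime q d)
    (c : ℕ) (hc : c = 2 ^ η * d)
    (u : ℤ) (hu : (q : ℤ) ^ (4 + r) * u ≡ 1 [ZMOD (c : ℤ)])
    (n m : ℤ) (hB : Bsum u n m c ≠ 0) :
    4 ∣ Int.gcd n m ∧ Int.gcd n (c : ℤ) = Int.gcd m (c : ℤ) :=
  Bsum_ne_zero_conditions_general η d hη c hc u n m hB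
end

section
/- Let q be an odd prime, r ≥ 0 an integer, and t an integer with gcd(t,q) = 1. Define T = Σ_{β ∈ (ℤ/q²ℤ)ˣ} (β/q)^r · e(t·q^r·β̄ / q²), where β̄ is the inverse of β modulo q² and (β/q) is the Legendre symbol. Then |T| = q^{3/2} if r = 1; T = q(q−1) if r ≥ 2 is even; and T = 0 if r = 0 or if r ≥ 3 is odd. -/
open Finset

theorem AddMonoidHom.sum_comp_of_surjective {G H F M : Type*} [AddGroup G] [Fintype G]
    [AddGroup H] [Fintype H] [DecidableEq H] [FunLike F G H] [AddMonoidHomClass F G H]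
    [AddCommMonoid M] (φ : F) (hφ : Function.Surjective φ) (f : H → M) :
    ∑ x, f (φ x) = #{x | φ x = 0} • ∑ y, f y := by
  rw [← Finset.sum_fiberwise' univ φ f, smul_sum]
  refine Finset.sum_congr rfl fun y _ ↦ ?_
  rw [sum_const, card_fiber_eq_of_mem_range φ (hφ y) ⟨0, map_zero φ⟩]

theorem AddChar.sum_ite_eq_zero_of_map_ne_one {G R : Type*} [AddGroup G] [Fintype G]
    [CommRing R] [IsDomain R] (ψ : AddChar G R) (p : G → Prop) [DecidablePred p] {a : G}
    (hp : ∀ x, p (x + a) ↔ p x) (ha : ψ a ≠ 1) :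
    ∑ x, (if p x then ψ x else 0) = 0 := by
  refine eq_zero_of_mul_eq_self_left ha ?_
  calc ψ a * ∑ x, (if p x then ψ x else 0)
      = ∑ x, (if p (x + a) then ψ (x + a) else 0) := by
        simp only [hp, AddChar.map_add_eq_mul, mul_sum]
        exact Finset.sum_congr rfl fun x _ ↦ by split_ifs <;> ring
    _ = ∑ x, (if p x then ψ x else 0) := Fintype.sum_equiv (Equiv.addRight a) _ _ fun _ ↦ rfl

theorem sq_norm_gaussSum {F : Type*} [Field F] [Fintype F] {χ : MulChar F ℂ} (hχ : χ ≠ 1)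
    {ψ : AddChar F ℂ} (hψ : ψ.IsPrimitive) : ‖gaussSum χ ψ‖ ^ 2 = Fintype.card F := by
  rw [← Complex.ofReal_inj]
  push_cast
  rw [← Complex.mul_conj', starRingEnd_apply, star_gaussSum_eq,
    gaussSum_mul_gaussSum_eq_card hχ hψ]

theorem MulChar.IsQuadratic.sum_pow_of_even {R R' : Type*} [CommRing R] [Fintype R]
    [DecidableEq R] [CommRing R'] {χ : MulChar R R'} (hχ : χ.IsQuadratic) {r : ℕ} (hr : r ≠ 0)
    (he : Even r) : ∑ a, χ a ^ r = Fintype.card Rˣ := by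
  obtain ⟨k, rfl⟩ := he
  simp_rw [← MulChar.pow_apply' χ hr, ← two_mul, pow_mul, hχ.sq_eq_one, one_pow]
  exact MulChar.sum_one_eq_card_units

theorem MulChar.IsQuadratic.sum_pow_of_odd {R R' : Type*} [CommRing R] [Fintype R]
    [CommRing R'] [IsDomain R'] {χ : MulChar R R'} (hχ : χ.IsQuadratic) (hχ₁ : χ ≠ 1) {r : ℕ}
    (ho : Odd r) : ∑ a, χ a ^ r = 0 := by
  obtain ⟨k, rfl⟩ := ho
  simp_rw [← MulChar.pow_apply' χ (Nat.add_one_ne_zero (2 * k)), pow_succ, pow_mul,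
    hχ.sq_eq_one, one_pow, one_mul]
  exact MulChar.sum_eq_zero_of_ne_one hχ₁

theorem Finset.sum_range_eq_sum_zmod {n : ℕ} [NeZero n] {M : Type*} [AddCommMonoid M]
    (f : ZMod n → M) : ∑ β ∈ range n, f β = ∑ x, f x :=
  Finset.sum_nbij' (↑) ZMod.val (by simp) (by simp [ZMod.val_lt])
    (fun β hβ ↦ ZMod.val_cast_of_lt (mem_range.mp hβ)) (by simp) (by simp)

namespace ZMod

theorem sum_castHom_eq_smul {m n : ℕ} [NeZero m] [NeZero n] (h : m ∣ n) {M : Type*}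
    [AddCommMonoid M] (f : ZMod m → M) :
    ∑ x : ZMod n, f (castHom h (ZMod m) x) = (n / m) • ∑ y, f y := by
  have hsurj := castHom_surjective (n := n) (m := m) h
  rw [AddMonoidHom.sum_comp_of_surjective _ hsurj f]
  congr 1
  have hcard := AddMonoidHom.sum_comp_of_surjective _ hsurj fun _ ↦ (1 : ℕ)
  simp only [sum_const, card_univ, ZMod.card, smul_eq_mul, mul_one] at hcard
  exact (Nat.div_eq_of_eq_mul_left (NeZero.pos m) hcard).symm

theorem sum_ite_isUnit_inv {n : ℕ} [NeZero n] {M : Type*} [AddCommMonoid M] (f : ZMod n → M) :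
    ∑ x, (if IsUnit x then f x⁻¹ else 0) = ∑ x, if IsUnit x then f x else 0 := by
  have inv_isUnit {x : ZMod n} (hx : IsUnit x) : IsUnit x⁻¹ := by
    obtain ⟨u, rfl⟩ := hx
    exact inv_coe_unit u ▸ Units.isUnit _
  have inv_inv {x : ZMod n} (hx : IsUnit x) : x⁻¹⁻¹ = x := by
    obtain ⟨u, rfl⟩ := hx
    simp only [inv_coe_unit, _root_.inv_inv]
  simp only [← Finset.sum_filter]
  refine Finset.sum_nbij' (·⁻¹) (·⁻¹) ?_ ?_ ?_ ?_ fun _ _ ↦ rfl <;>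
    simp +contextual [inv_isUnit, inv_inv]

theorem isUnit_iff_castHom_ne_zero {p k : ℕ} (hp : p.Prime) (hk : k ≠ 0) (x : ZMod (p ^ k)) :
    IsUnit x ↔ castHom (dvd_pow_self p hk) (ZMod p) x ≠ 0 := by
  have : NeZero (p ^ k) := ⟨pow_ne_zero k hp.ne_zero⟩
  rw [← natCast_zmod_val x, isUnit_natCast_iff_not_dvd_pow hp (Nat.pos_of_ne_zero hk),
    map_natCast, Ne, natCast_eq_zero_iff]

theorem stdAddChar_natCast_div_mul {m n : ℕ} [NeZero m] [NeZero n] (h : m ∣ n) (x : ZMod n) :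
    stdAddChar (((n / m : ℕ) : ZMod n) * x) = stdAddChar (castHom h (ZMod m) x) := by
  obtain ⟨j, rfl⟩ := intCast_surjective x
  obtain ⟨k, rfl⟩ := h
  have hm : (m : ℂ) ≠ 0 := Nat.cast_ne_zero.mpr (NeZero.ne m)
  have hk : (k : ℂ) ≠ 0 := Nat.cast_ne_zero.mpr (right_ne_zero_of_mul (NeZero.ne (m * k)))
  rw [map_intCast, Nat.mul_div_cancel_left k (NeZero.pos m), ← Int.cast_natCast, ← Int.cast_mul,
    stdAddChar_coe, stdAddChar_coe]
  congr 1
  push_cast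
  field_simp

end ZMod

theorem eC_intCast_div_s11 (N : ℕ) [NeZero N] (j : ℤ) :
    eC (j / N) = ZMod.stdAddChar (j : ZMod N) := by
  rw [ZMod.stdAddChar_coe, eC]
  push_cast
  ring_nf

noncomputable def legendreChar (q : ℕ) [Fact q.Prime] : MulChar (ZMod q) ℂ :=
  (quadraticChar (ZMod q)).ringHomComp (Int.castRingHom ℂ)

theorem legendreChar_ne_one {q : ℕ} [Fact q.Prime] (hq : q ≠ 2) : legendreChar q ≠ 1 :=
  (MulChar.ringHomComp_ne_one_iff (RingHom.injective_int _)).mpr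
    (quadraticChar_ne_one (by rwa [ZMod.ringChar_zmod_n]))

theorem legendreChar_isQuadratic (q : ℕ) [Fact q.Prime] : (legendreChar q).IsQuadratic :=
  (quadraticChar_isQuadratic (ZMod q)).comp _

theorem legendreSym_eq_legendreChar_castHom {q k : ℕ} [Fact q.Prime] (h : q ∣ k) (β : ℕ) :
    ((legendreSym q β : ℤ) : ℂ) = legendreChar q (ZMod.castHom h (ZMod q) β) := by
  rw [map_natCast, legendreChar, MulChar.ringHomComp_apply, legendreSym, Int.cast_natCast]
  rfl

theorem legendreChar_castHom_inv {q k : ℕ} [Fact q.Prime] (h : q ∣ k) {x : ZMod k}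
    (hx : IsUnit x) :
    legendreChar q (ZMod.castHom h (ZMod q) x⁻¹) = legendreChar q (ZMod.castHom h (ZMod q) x) := by
  obtain ⟨u, rfl⟩ := hx
  rw [ZMod.inv_coe_unit, map_units_inv, ← MulChar.inv_apply', (legendreChar_isQuadratic q).inv]

theorem norm_sum_legendreChar_mul_stdAddChar {q : ℕ} [Fact q.Prime] (hq : q ≠ 2) {t : ℤ}
    (ht : ¬ (q : ℤ) ∣ t) :
    ‖∑ y : ZMod q, legendreChar q y * ZMod.stdAddChar ((t : ZMod q) * y)‖ = √q := by
  have htq : (t : ZMod q) ≠ 0 := (ZMod.intCast_zmod_eq_zero_iff_dvd t q).not.mpr ht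
  have hψ := AddChar.IsPrimitive.of_ne_one (ZMod.isPrimitive_stdAddChar q htq)
  rw [← Real.sqrt_sq (norm_nonneg _)]
  exact congrArg (√·) ((sq_norm_gaussSum (legendreChar_ne_one hq) hψ).trans (by simp))

theorem sum_range_legendreSym_eC_eq_sum_zmod (q r : ℕ) [Fact q.Prime] (t : ℤ) :
    ∑ β ∈ Finset.range (q ^ 2),
        (if Nat.Coprime β (q ^ 2) then
          ((legendreSym q (β : ℤ) : ℤ) : ℂ) ^ r *
            eC (((t * (q : ℤ) ^ r * ((((β : ZMod (q ^ 2))⁻¹).val : ℕ) : ℤ) : ℤ) : ℝ) /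
              ((q : ℝ) ^ 2))
        else 0) =
      ∑ x : ZMod (q ^ 2), if IsUnit x then
        legendreChar q (ZMod.castHom (dvd_pow_self q two_ne_zero) (ZMod q) x) ^ r *
          ZMod.stdAddChar (((t * q ^ r : ℤ) : ZMod (q ^ 2)) * x) else 0 := by
  rw [← ZMod.sum_ite_isUnit_inv, ← Finset.sum_range_eq_sum_zmod]
  refine Finset.sum_congr rfl fun β _ ↦ ?_
  simp only [ZMod.isUnit_iff_coprime]
  split_ifs with hβ
  · rw [legendreSym_eq_legendreChar_castHom (dvd_pow_self q two_ne_zero),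
      ← legendreChar_castHom_inv _
      ((ZMod.isUnit_iff_coprime β _).mpr hβ)]
    have := eC_intCast_div_s11 (q ^ 2) (t * q ^ r * ((β : ZMod (q ^ 2))⁻¹.val : ℤ))
    push_cast at this ⊢
    rw [this, ZMod.natCast_zmod_val]
  · rfl

theorem sum_isUnit_stdAddChar_eq_zero {q : ℕ} [hq : Fact q.Prime] {t : ℤ} (ht : ¬ (q : ℤ) ∣ t) :
    ∑ x : ZMod (q ^ 2), (if IsUnit x then ZMod.stdAddChar ((t : ZMod (q ^ 2)) * x) else 0) = 0 := by
  refine (ZMod.stdAddChar.mulShift (t : ZMod (q ^ 2))).sum_ite_eq_zero_of_map_ne_one _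
    (a := (q : ZMod (q ^ 2))) (fun x ↦ ?_) ?_
  · rw [ZMod.isUnit_iff_castHom_ne_zero hq.out two_ne_zero,
      ZMod.isUnit_iff_castHom_ne_zero hq.out two_ne_zero,
      map_add, map_natCast, ZMod.natCast_self, add_zero]
  · rw [AddChar.mulShift_apply, Ne, ← (ZMod.stdAddChar (N := q ^ 2)).map_zero_eq_one,
      ZMod.injective_stdAddChar.eq_iff, ← Int.cast_natCast, ← Int.cast_mul,
      ZMod.intCast_zmod_eq_zero_iff_dvd]
    push_cast
    rw [sq]
    exact fun h ↦ ht (Int.dvd_of_mul_dvd_mul_right (by exact_mod_cast hq.out.ne_zero) h)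

theorem sum_isUnit_pow_mul_stdAddChar_eq {q r : ℕ} [Fact q.Prime] (hr : r ≠ 0)
    (χ : MulChar (ZMod q) ℂ) (t : ℤ) :
    ∑ x : ZMod (q ^ 2), (if IsUnit x then
        χ (ZMod.castHom (dvd_pow_self q two_ne_zero) (ZMod q) x) ^ r *
          ZMod.stdAddChar (((t * q ^ r : ℤ) : ZMod (q ^ 2)) * x) else 0) =
      q * ∑ y : ZMod q, χ y ^ r * ZMod.stdAddChar (((t * q ^ (r - 1) : ℤ) : ZMod q) * y) := by
  have hq : q.Prime := Fact.out
  have hq2 : q ^ 2 / q = q := by rw [sq, Nat.mul_div_cancel _ hq.pos]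
  set π := ZMod.castHom (dvd_pow_self q two_ne_zero) (ZMod q)
  have hterm (x : ZMod (q ^ 2)) : (if IsUnit x then
      χ (π x) ^ r * ZMod.stdAddChar (((t * q ^ r : ℤ) : ZMod (q ^ 2)) * x) else 0) =
      χ (π x) ^ r * ZMod.stdAddChar (((t * q ^ (r - 1) : ℤ) : ZMod q) * π x) := by
    split_ifs with hx
    · have hshift : ((t * q ^ r : ℤ) : ZMod (q ^ 2)) * x =
          ((q ^ 2 / q : ℕ) : ZMod (q ^ 2)) * (((t * q ^ (r - 1) : ℤ) : ZMod (q ^ 2)) * x) := by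
        obtain ⟨s, rfl⟩ := Nat.exists_eq_add_one_of_ne_zero hr
        rw [hq2]
        push_cast
        ring
      rw [hshift, ZMod.stdAddChar_natCast_div_mul, map_mul, map_intCast]
    · rw [(ZMod.isUnit_iff_castHom_ne_zero hq two_ne_zero x).not_left.mp hx, MulChar.map_zero,
        zero_pow hr, zero_mul]
  rw [Finset.sum_congr rfl fun x _ ↦ hterm x,
    ZMod.sum_castHom_eq_smul _
      fun y ↦ χ y ^ r * ZMod.stdAddChar (((t * q ^ (r - 1) : ℤ) : ZMod q) * y),
    hq2, nsmul_eq_mul]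

/-- evaluation of `T = Σ_{β ∈ (ℤ/q²ℤ)ˣ} (β/q)^r e(t·q^r·β̄/q²)`:
`|T| = q^{3/2}` if `r = 1`; `T = q(q−1)` if `r ≥ 2` is even; `T = 0` if `r = 0` or `r ≥ 3`
is odd. -/
theorem T_eval (q : ℕ) [Fact q.Prime] (hqodd : Odd q) (r : ℕ) (t : ℤ)
    (ht : IsCoprime t (q : ℤ)) (T : ℂ)
    (hT : T = ∑ β ∈ Finset.range (q ^ 2),
        if Nat.Coprime β (q ^ 2) then
          ((legendreSym q (β : ℤ) : ℤ) : ℂ) ^ r *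
            eC (((t * (q : ℤ) ^ r * ((((β : ZMod (q ^ 2))⁻¹).val : ℕ) : ℤ) : ℤ) : ℝ) /
              ((q : ℝ) ^ 2))
        else 0) :
    (r = 1 → ‖T‖ = (q : ℝ) ^ ((3 : ℝ) / 2)) ∧
    (2 ≤ r → Even r → T = (q : ℂ) * ((q : ℂ) - 1)) ∧
    (r = 0 ∨ (3 ≤ r ∧ Odd r) → T = 0) := by
  have hq : q.Prime := Fact.out
  have hq2 : q ≠ 2 := fun h ↦ Nat.not_even_iff_odd.mpr hqodd (h ▸ even_two)
  have hqt : ¬ (q : ℤ) ∣ t := fun h ↦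
    (Nat.prime_iff_prime_int.mp hq).not_isUnit (ht.isUnit_of_dvd' h dvd_rfl)
  rw [sum_range_legendreSym_eC_eq_sum_zmod] at hT
  have hT₁ (hr : r ≠ 0) : T = q * ∑ y : ZMod q,
      legendreChar q y ^ r * ZMod.stdAddChar (((t * q ^ (r - 1) : ℤ) : ZMod q) * y) :=
    hT.trans (sum_isUnit_pow_mul_stdAddChar_eq hr _ t)
  have hT₂ (hr : 2 ≤ r) : T = q * ∑ y : ZMod q, legendreChar q y ^ r := by
    rw [hT₁ (by omega)]
    push_cast
    simp [zero_pow (show r - 1 ≠ 0 by omega)]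
  refine ⟨?_, fun hr he ↦ ?_, ?_⟩
  · rintro rfl
    rw [hT₁ one_ne_zero, norm_mul, Complex.norm_natCast]
    simp only [pow_one, Nat.sub_self, pow_zero, mul_one]
    rw [norm_sum_legendreChar_mul_stdAddChar hq2 hqt, Real.sqrt_eq_rpow,
      ← Real.rpow_one_add' (by positivity) (by norm_num)]
    norm_num
  · rw [hT₂ hr, (legendreChar_isQuadratic q).sum_pow_of_even (by omega) he, ZMod.card_units,
      Nat.cast_sub hq.one_le, Nat.cast_one]
  · rintro (rfl | ⟨hr, ho⟩)
    · simpa [hT] using sum_isUnit_stdAddChar_eq_zero hqt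
    · rw [hT₂ (by omega), (legendreChar_isQuadratic q).sum_pow_of_odd (legendreChar_ne_one hq2) ho,
        mul_zero]
end

section
/- Let c₁ and c₂ be coprime positive integers, let c̄₂ be an inverse of c₂ modulo c₁, and let c̄₁ be an inverse of c₁ modulo c₂. Then for all integers n, m, S(n, m; c₁·c₂) = S(c̄₂·n, c̄₂·m; c₁) · S(c̄₁·n, c̄₁·m; c₂). -/

lemma eC_add (x y : ℝ) : eC (x + y) = eC x * eC y := by
  rw [eC, eC, eC, ← Complex.exp_add]
  push_cast
  ring_nf

lemma eC_int (k : ℤ) : eC k = 1 := by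
  rw [eC, show (2 * (Real.pi : ℂ) * Complex.I * ((k : ℝ) : ℂ)) = k * (2 * Real.pi * Complex.I) by
    push_cast; ring]
  exact Complex.exp_int_mul_two_pi_mul_I k

lemma eC_congr {c : ℕ} (hc : 0 < c) {a b : ℤ} (h : a ≡ b [ZMOD (c : ℤ)]) :
    eC ((a : ℝ) / c) = eC ((b : ℝ) / c) := by
  obtain ⟨k, hk⟩ := h.dvd
  have hc' : (c : ℝ) ≠ 0 := Nat.cast_ne_zero.mpr hc.ne'
  have : (b : ℝ) / c = (a : ℝ) / c + (k : ℝ) := by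
    have hb : b = a + c * k := by linarith [hk]
    rw [hb]; push_cast; field_simp
  rw [this, eC_add, eC_int, mul_one]

lemma kloos_eq (a b : ℤ) (c : ℕ) [NeZero c] :
    kloos a b c = ∑ u : (ZMod c)ˣ,
      eC (((a * (((u : ZMod c)).val : ℤ) + b * ((((u⁻¹ : (ZMod c)ˣ) : ZMod c)).val : ℤ) : ℤ) : ℝ)
        / (c : ℝ)) := by
  rw [kloos, ← Finset.sum_filter]
  refine (Finset.sum_bij' (fun x hx => ZMod.unitOfCoprime x
      (Finset.mem_filter.mp hx).2) (fun u _ => (u : ZMod c).val) ?_ ?_ ?_ ?_ ?_).symm.symm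
  · intro x hx
    exact Finset.mem_univ _
  · intro u _
    simp only [Finset.mem_filter, Finset.mem_range]
    exact ⟨ZMod.val_lt _, ZMod.val_coe_unit_coprime u⟩
  · intro x hx
    rw [ZMod.coe_unitOfCoprime, ZMod.val_natCast,
      Nat.mod_eq_of_lt (Finset.mem_range.mp (Finset.mem_filter.mp hx).1)]
  · intro u _
    apply Units.ext
    rw [ZMod.coe_unitOfCoprime, ZMod.natCast_zmod_val]
  · intro x hx
    have h1 : ((x : ℕ) : ZMod c) = (ZMod.unitOfCoprime x (Finset.mem_filter.mp hx).2 : ZMod c) :=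
      (ZMod.coe_unitOfCoprime _ _).symm
    have h2 : (ZMod.unitOfCoprime x (Finset.mem_filter.mp hx).2 : ZMod c).val = x := by
      rw [ZMod.coe_unitOfCoprime, ZMod.val_natCast,
        Nat.mod_eq_of_lt (Finset.mem_range.mp (Finset.mem_filter.mp hx).1)]
    rw [h1, ZMod.inv_coe_unit, h2]

lemma crt_fst_val {c₁ c₂ : ℕ} [NeZero c₁] [NeZero c₂] (hcop : Nat.Coprime c₁ c₂)
    (x : ZMod (c₁ * c₂)) :
    ((((ZMod.chineseRemainder hcop) x).1).val : ℤ) ≡ (x.val : ℤ) [ZMOD (c₁ : ℤ)] := by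
  have h : ((ZMod.chineseRemainder hcop) x).1 = ((x.val : ℕ) : ZMod c₁) := by
    have : ((ZMod.chineseRemainder hcop) x).1 = (ZMod.cast x : ZMod c₁) := by
      simp [ZMod.chineseRemainder, ZMod.castHom_apply, Prod.fst_zmod_cast]
    rw [this, ← ZMod.natCast_val]
  rw [h, ZMod.val_natCast]
  exact Int.natCast_modEq_iff.mpr (Nat.mod_modEq _ _)

lemma crt_snd_val {c₁ c₂ : ℕ} [NeZero c₁] [NeZero c₂] (hcop : Nat.Coprime c₁ c₂)
    (x : ZMod (c₁ * c₂)) :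
    ((((ZMod.chineseRemainder hcop) x).2).val : ℤ) ≡ (x.val : ℤ) [ZMOD (c₂ : ℤ)] := by
  have h : ((ZMod.chineseRemainder hcop) x).2 = ((x.val : ℕ) : ZMod c₂) := by
    have : ((ZMod.chineseRemainder hcop) x).2 = (ZMod.cast x : ZMod c₂) := by
      simp [ZMod.chineseRemainder, ZMod.castHom_apply, Prod.snd_zmod_cast]
    rw [this, ← ZMod.natCast_val]
  rw [h, ZMod.val_natCast]
  exact Int.natCast_modEq_iff.mpr (Nat.mod_modEq _ _)

/-- twisted multiplicativity of Kloosterman sums: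
`S(n, m; c₁c₂) = S(c̄₂n, c̄₂m; c₁)·S(c̄₁n, c̄₁m; c₂)`. -/
theorem kloos_mul (c₁ c₂ : ℕ) (h₁ : 0 < c₁) (h₂ : 0 < c₂) (hcop : Nat.Coprime c₁ c₂)
    (cbar₂ cbar₁ : ℤ) (hbar₂ : (c₂ : ℤ) * cbar₂ ≡ 1 [ZMOD (c₁ : ℤ)])
    (hbar₁ : (c₁ : ℤ) * cbar₁ ≡ 1 [ZMOD (c₂ : ℤ)]) (n m : ℤ) :
    kloos n m (c₁ * c₂) = kloos (cbar₂ * n) (cbar₂ * m) c₁ * kloos (cbar₁ * n) (cbar₁ * m) c₂ := by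
  haveI : NeZero c₁ := ⟨h₁.ne'⟩
  haveI : NeZero c₂ := ⟨h₂.ne'⟩
  haveI : NeZero (c₁ * c₂) := ⟨Nat.mul_ne_zero h₁.ne' h₂.ne'⟩
  have hN : 0 < c₁ * c₂ := Nat.mul_pos h₁ h₂
  rw [kloos_eq, kloos_eq, kloos_eq, Finset.sum_mul_sum, ← Fintype.sum_prod_type']
  set ψ := (Units.mapEquiv (ZMod.chineseRemainder hcop).toMulEquiv).trans MulEquiv.prodUnits
    with hψ
  refine Fintype.sum_equiv ψ.toEquiv _ _ (fun u => ?_)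
  -- notation
  set x : ZMod (c₁ * c₂) := (u : ZMod (c₁ * c₂)) with hx
  set y : ZMod (c₁ * c₂) := ((u⁻¹ : (ZMod (c₁ * c₂))ˣ) : ZMod (c₁ * c₂)) with hy
  have hfst : ∀ v : (ZMod (c₁ * c₂))ˣ,
      (((ψ v).1 : (ZMod c₁)ˣ) : ZMod c₁) = ((ZMod.chineseRemainder hcop) (v : ZMod (c₁*c₂))).1 := by
    intro v; rfl
  have hsnd : ∀ v : (ZMod (c₁ * c₂))ˣ,
      (((ψ v).2 : (ZMod c₂)ˣ) : ZMod c₂) = ((ZMod.chineseRemainder hcop) (v : ZMod (c₁*c₂))).2 := by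
    intro v; rfl
  have hinv1 : ((ψ u).1)⁻¹ = (ψ u⁻¹).1 := by rw [map_inv]; rfl
  have hinv2 : ((ψ u).2)⁻¹ = (ψ u⁻¹).2 := by rw [map_inv]; rfl
  have hv1 : ((((ψ u).1 : (ZMod c₁)ˣ) : ZMod c₁).val : ℤ) ≡ (x.val : ℤ) [ZMOD (c₁ : ℤ)] := by
    rw [hfst u]; exact crt_fst_val hcop x
  have hw1 : (((((ψ u).1)⁻¹ : (ZMod c₁)ˣ) : ZMod c₁).val : ℤ) ≡ (y.val : ℤ) [ZMOD (c₁ : ℤ)] := by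
    rw [hinv1, hfst u⁻¹]; exact crt_fst_val hcop y
  have hv2 : ((((ψ u).2 : (ZMod c₂)ˣ) : ZMod c₂).val : ℤ) ≡ (x.val : ℤ) [ZMOD (c₂ : ℤ)] := by
    rw [hsnd u]; exact crt_snd_val hcop x
  have hw2 : (((((ψ u).2)⁻¹ : (ZMod c₂)ˣ) : ZMod c₂).val : ℤ) ≡ (y.val : ℤ) [ZMOD (c₂ : ℤ)] := by
    rw [hinv2, hsnd u⁻¹]; exact crt_snd_val hcop y
  -- key congruence
  have hcopZ : IsCoprime (c₁ : ℤ) (c₂ : ℤ) := Nat.isCoprime_iff_coprime.mpr hcop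
  have key : ((c₂ : ℤ) * cbar₂ + (c₁ : ℤ) * cbar₁) ≡ 1 [ZMOD ((c₁ * c₂ : ℕ) : ℤ)] := by
    have d1 : (c₁ : ℤ) ∣ ((c₂ : ℤ) * cbar₂ + (c₁ : ℤ) * cbar₁ - 1) := by
      have h := Int.ModEq.dvd hbar₂
      have e : (c₂ : ℤ) * cbar₂ + (c₁ : ℤ) * cbar₁ - 1
          = -(1 - (c₂ : ℤ) * cbar₂) + (c₁ : ℤ) * cbar₁ := by ring
      rw [e]
      exact dvd_add (dvd_neg.mpr h) ⟨cbar₁, rfl⟩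
    have d2 : (c₂ : ℤ) ∣ ((c₂ : ℤ) * cbar₂ + (c₁ : ℤ) * cbar₁ - 1) := by
      have h := Int.ModEq.dvd hbar₁
      have e : (c₂ : ℤ) * cbar₂ + (c₁ : ℤ) * cbar₁ - 1
          = -(1 - (c₁ : ℤ) * cbar₁) + (c₂ : ℤ) * cbar₂ := by ring
      rw [e]
      exact dvd_add (dvd_neg.mpr h) ⟨cbar₂, rfl⟩
    have dN : ((c₁ * c₂ : ℕ) : ℤ) ∣ ((c₂ : ℤ) * cbar₂ + (c₁ : ℤ) * cbar₁ - 1) := by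
      push_cast
      exact hcopZ.mul_dvd d1 d2
    rw [Int.modEq_iff_dvd, show (1 : ℤ) - ((c₂ : ℤ) * cbar₂ + (c₁ : ℤ) * cbar₁)
      = -(((c₂ : ℤ) * cbar₂ + (c₁ : ℤ) * cbar₁) - 1) by ring]
    exact dvd_neg.mpr dN
  set t : ℤ := n * (x.val : ℤ) + m * (y.val : ℤ) with ht
  have step1 : eC ((t : ℝ) / ((c₁ * c₂ : ℕ) : ℝ)) =
      eC (((((c₂ : ℤ) * cbar₂ + (c₁ : ℤ) * cbar₁) * t : ℤ) : ℝ) / ((c₁ * c₂ : ℕ) : ℝ)) := by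
    refine eC_congr hN ?_
    have := (key.mul_right t)
    rw [one_mul] at this
    exact this.symm
  have step2 : (((((c₂ : ℤ) * cbar₂ + (c₁ : ℤ) * cbar₁) * t : ℤ)) : ℝ) / ((c₁ * c₂ : ℕ) : ℝ) =
      ((cbar₂ * t : ℤ) : ℝ) / (c₁ : ℝ) + ((cbar₁ * t : ℤ) : ℝ) / (c₂ : ℝ) := by
    have hc1 : (c₁ : ℝ) ≠ 0 := Nat.cast_ne_zero.mpr h₁.ne'
    have hc2 : (c₂ : ℝ) ≠ 0 := Nat.cast_ne_zero.mpr h₂.ne'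
    push_cast
    field_simp
  have step3 : eC (((cbar₂ * t : ℤ) : ℝ) / (c₁ : ℝ)) =
      eC (((cbar₂ * n * ((((ψ u).1 : (ZMod c₁)ˣ) : ZMod c₁).val : ℤ)
        + cbar₂ * m * (((((ψ u).1)⁻¹ : (ZMod c₁)ˣ) : ZMod c₁).val : ℤ) : ℤ) : ℝ) / (c₁ : ℝ)) := by
    refine eC_congr h₁ ?_
    have h := ((hv1.mul_left (cbar₂ * n)).add (hw1.mul_left (cbar₂ * m))).symm
    calc cbar₂ * t = cbar₂ * n * (x.val : ℤ) + cbar₂ * m * (y.val : ℤ) := by ring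
    _ ≡ _ [ZMOD (c₁ : ℤ)] := h
  have step4 : eC (((cbar₁ * t : ℤ) : ℝ) / (c₂ : ℝ)) =
      eC (((cbar₁ * n * ((((ψ u).2 : (ZMod c₂)ˣ) : ZMod c₂).val : ℤ)
        + cbar₁ * m * (((((ψ u).2)⁻¹ : (ZMod c₂)ˣ) : ZMod c₂).val : ℤ) : ℤ) : ℝ) / (c₂ : ℝ)) := by
    refine eC_congr h₂ ?_
    have h := ((hv2.mul_left (cbar₁ * n)).add (hw2.mul_left (cbar₁ * m))).symm
    calc cbar₁ * t = cbar₁ * n * (x.val : ℤ) + cbar₁ * m * (y.val : ℤ) := by ring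
    _ ≡ _ [ZMOD (c₂ : ℤ)] := h
  show eC ((t : ℝ) / ((c₁ * c₂ : ℕ) : ℝ)) = _
  rw [step1, step2, eC_add, step3, step4]
  rfl
end
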